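/- arXiv:1904.08583 — 8 statements merged into one kernel-verified Lean document; each statement's English description precedes it below -/
import Mathlib

section
/- For the cycle C_n on n ≥ 3 vertices, md(C_n) = ⌊n/2⌋. -/
/-!
A color class consisting of a single edge `e` can only separate the ends of `e` if `e` is a
bridge. The cycle has no bridges, so every color of an MD-coloring of `C_n` is used on at least
two of its `n` edges, giving at most `⌊n/2⌋` colors. Conversely, coloring the `i`-th edge of the
cycle by `i mod ⌊n/2⌋` works: the edges `a` and `a + ⌊n/2⌋` share a color and cut off the arc
`(a, a + ⌊n/2⌋]`, and any two vertices are separated by one such arc.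
-/
/-- An MD-coloring: an edge-coloring such that every pair of distinct vertices is
separated by a monochromatic edge-cut (equivalently, by some color class). -/
def isMDColoring {V : Type*} (G : SimpleGraph V) (c : Sym2 V → ℕ) : Prop :=
  ∀ u v : V, u ≠ v → ∃ i : ℕ, ¬ (G.deleteEdges {e | c e = i}).Reachable u v

/-- The monochromatic disconnection number: the maximum number of colors used on
edges over all MD-colorings. -/
noncomputable def mdNum {V : Type*} (G : SimpleGraph V) : ℕ :=
  sSup {n | ∃ c : Sym2 V → ℕ, isMDColoring G c ∧ (c '' G.edgeSet).ncard = n}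

open SimpleGraph Finset

section General

variable {V : Type*} {G : SimpleGraph V} {c : Sym2 V → ℕ}

theorem SimpleGraph.Reachable.mem_iff_of_forall_adj {S : Set V}
    (hS : ∀ ⦃x y⦄, G.Adj x y → x ∈ S → y ∈ S) {u v : V} (h : G.Reachable u v) :
    u ∈ S ↔ v ∈ S := by
  obtain ⟨p⟩ := h
  induction p with
  | nil => rfl
  | cons hadj _ ih => exact ⟨fun hu => ih.1 (hS hadj hu), fun hv => hS hadj.symm (ih.2 hv)⟩

theorem isMDColoring.exists_ne_color_eq (hc : isMDColoring G c) {e : Sym2 V}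
    (he : e ∈ G.edgeSet) (hb : ¬ G.IsBridge e) : ∃ e' ∈ G.edgeSet, e' ≠ e ∧ c e' = c e := by
  induction e with | h u v =>
  obtain ⟨i, hi⟩ := hc u v (G.ne_of_adj he)
  have hci : c s(u, v) = i := by
    by_contra h
    exact hi (deleteEdges_adj.mpr ⟨he, h⟩).reachable
  by_contra! hall
  refine hi ((not_not.mp (isBridge_iff.not.mp hb)).mono fun x y hxy => ?_)
  rw [deleteEdges_adj, Set.mem_singleton_iff] at hxy
  exact deleteEdges_adj.mpr ⟨hxy.1, hci ▸ hall _ hxy.1 hxy.2⟩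

theorem isMDColoring.two_mul_ncard_image_le [Fintype G.edgeSet] (hc : isMDColoring G c)
    (hG : ∀ e ∈ G.edgeSet, ¬ G.IsBridge e) :
    2 * (c '' G.edgeSet).ncard ≤ G.edgeSet.ncard := by
  classical
  rw [← coe_edgeFinset, ← coe_image, Set.ncard_coe_finset, Set.ncard_coe_finset]
  refine mul_card_image_le_card _ _ fun i hi => ?_
  obtain ⟨e, he, rfl⟩ := mem_image.mp hi
  rw [mem_edgeFinset] at he
  obtain ⟨e', he', hne, hce⟩ := hc.exists_ne_color_eq he (hG e he)
  calc 2 = #{e', e} := (card_pair hne).symm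
    _ ≤ _ := card_le_card (by simp [insert_subset_iff, he, he', hce])

end General

theorem cycleGraph_adj_iff_val {n : ℕ} (hn : 2 ≤ n) {x y : Fin n} :
    (cycleGraph n).Adj x y ↔ x.val + 1 = y.val ∨ y.val + 1 = x.val ∨
      (x.val + 1 = n ∧ y.val = 0) ∨ (y.val + 1 = n ∧ x.val = 0) := by
  have := x.isLt
  have := y.isLt
  rw [cycleGraph_adj']
  rcases lt_trichotomy x y with h | rfl | h
  · rw [Fin.coe_sub_iff_lt.mpr h, Fin.sub_val_of_le h.le]
    omega
  · rw [Fin.sub_val_of_le le_rfl]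
    omega
  · rw [Fin.coe_sub_iff_lt.mpr h, Fin.sub_val_of_le h.le]
    omega

theorem cycleGraph.mem_edges_cycle (k : ℕ) {e : Sym2 (Fin (k + 3))}
    (he : e ∈ (cycleGraph (k + 3)).edgeSet) : e ∈ (cycleGraph.cycle k).edges := by
  induction e with | h u v =>
  rw [mem_edgeSet, cycleGraph_adj_iff_val (by omega)] at he
  rw [Walk.mk_mem_edges_iff_exists, cycleGraph.length_cycle]
  wlog h : u.val + 1 = v.val ∨ (v.val + 1 = k + 3 ∧ u.val = 0) generalizing u v
  · obtain ⟨i, hi, he⟩ := this v u (by omega) (by omega)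
    exact ⟨i, hi, he.trans Sym2.eq_swap⟩
  -- `cycleGraph.cycle k` runs downwards: its `i`-th vertex is `-i`.
  rcases h with h | ⟨h₁, h₂⟩
  · refine ⟨k + 2 - u.val, by omega, ?_⟩
    rw [cycleGraph.getVert_cycle (by omega), cycleGraph.getVert_cycle (by omega), Sym2.eq_swap]
    congr 1 <;> ext <;> dsimp only <;> rw [Nat.mod_eq_of_lt (by omega)] <;> omega
  · refine ⟨0, by omega, ?_⟩
    rw [cycleGraph.getVert_cycle (by omega), cycleGraph.getVert_cycle (by omega)]
    congr 1 <;> ext <;> simp <;> omega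

theorem cycleGraph_not_isBridge (k : ℕ) {e : Sym2 (Fin (k + 3))}
    (he : e ∈ (cycleGraph (k + 3)).edgeSet) : ¬ (cycleGraph (k + 3)).IsBridge e :=
  fun hb => hb.notMem_edges_of_isCycle cycleGraph.isCycle_cycle (cycleGraph.mem_edges_cycle k he)

theorem ncard_edgeSet_cycleGraph (k : ℕ) : (cycleGraph (k + 3)).edgeSet.ncard = k + 3 := by
  have := sum_degrees_eq_twice_card_edges (cycleGraph (k + 3))
  simp only [cycleGraph_degree_three_le, sum_const, card_univ, Fintype.card_fin,
    smul_eq_mul] at this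
  rw [← coe_edgeFinset, Set.ncard_coe_finset]
  omega

theorem Nat.exists_Ioc_separating {m n u v : ℕ} (hm : 0 < m) (hmn : 2 * m ≤ n) (hu : u < n)
    (hv : v < n) (huv : u ≠ v) :
    ∃ a, a + m < n ∧ (u ∈ Set.Ioc a (a + m) ↔ v ∉ Set.Ioc a (a + m)) := by
  simp only [Set.mem_Ioc]
  wlog h : u < v generalizing u v
  · obtain ⟨a, ha, hsep⟩ := this hv hu huv.symm (by omega)
    exact ⟨a, ha, by tauto⟩
  by_cases h₁ : m ≤ u
  · exact ⟨u - m, by omega, by omega⟩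
  by_cases h₂ : v ≤ u + m
  · exact ⟨u, by omega, by omega⟩
  · exact ⟨v - m, by omega, by omega⟩

/-- The edge `{i, i + 1}` gets color `i mod ⌊n/2⌋`, and so does the closing edge `{n - 1, 0}`,
since `⌊(n - 1)/2⌋ = n - 1 - ⌊n/2⌋`. -/
def cycleColoring (n : ℕ) : Sym2 (Fin n) → ℕ :=
  Sym2.lift ⟨fun x y => (x.val + y.val) / 2 % (n / 2), fun x y => by simp only [add_comm]⟩

theorem cycleColoring_eq_of_adj_of_mem_Ioc {n a : ℕ} (hn : 2 ≤ n) (ha : a + n / 2 < n)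
    {x y : Fin n} (hxy : (cycleGraph n).Adj x y) (hx : x.val ∈ Set.Ioc a (a + n / 2))
    (hy : y.val ∉ Set.Ioc a (a + n / 2)) : cycleColoring n s(x, y) = a % (n / 2) := by
  rw [cycleGraph_adj_iff_val hn] at hxy
  rw [Set.mem_Ioc] at hx hy
  have : (x.val + y.val) / 2 = a ∨ (x.val + y.val) / 2 = a + n / 2 := by omega
  rcases this with h | h
  · exact congrArg (· % (n / 2)) h
  · exact (congrArg (· % (n / 2)) h).trans (Nat.add_mod_right a (n / 2))

theorem cycleColoring_isMDColoring {n : ℕ} (hn : 2 ≤ n) :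
    isMDColoring (cycleGraph n) (cycleColoring n) := by
  intro u v huv
  obtain ⟨a, ha, hsep⟩ := Nat.exists_Ioc_separating (m := n / 2) (by omega) (by omega)
    u.isLt v.isLt (Fin.val_ne_of_ne huv)
  refine ⟨a % (n / 2), fun h => ?_⟩
  have hS := h.mem_iff_of_forall_adj (S := {x | x.val ∈ Set.Ioc a (a + n / 2)})
    fun x y hxy hx => by
      by_contra hy
      rw [deleteEdges_adj] at hxy
      exact hxy.2 (cycleColoring_eq_of_adj_of_mem_Ioc hn ha hxy.1 hx hy)
  exact iff_not_self (hS.symm.trans hsep)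

theorem cycleColoring_image {n : ℕ} (hn : 2 ≤ n) :
    cycleColoring n '' (cycleGraph n).edgeSet = Set.Iio (n / 2) := by
  ext i
  constructor
  · rintro ⟨e, -, rfl⟩
    induction e with | h x y => exact Nat.mod_lt _ (by omega)
  · intro hi
    rw [Set.mem_Iio] at hi
    refine ⟨s(⟨i, by omega⟩, ⟨i + 1, by omega⟩), (cycleGraph_adj_iff_val hn).mpr (Or.inl rfl), ?_⟩
    change (i + (i + 1)) / 2 % (n / 2) = i
    rw [show (i + (i + 1)) / 2 = i by omega, Nat.mod_eq_of_lt hi]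

theorem cycle_md (n : ℕ) (hn : 3 ≤ n) :
    mdNum (SimpleGraph.cycleGraph n) = n / 2 := by
  obtain ⟨k, rfl⟩ : ∃ k, n = k + 3 := ⟨n - 3, by omega⟩
  refine IsGreatest.csSup_eq ⟨⟨cycleColoring _, cycleColoring_isMDColoring (by omega), ?_⟩, ?_⟩
  · rw [cycleColoring_image (by omega), Set.ncard_Iio_nat]
  · rintro _ ⟨c, hc, rfl⟩
    have := hc.two_mul_ncard_image_le fun e he => cycleGraph_not_isBridge k he
    rw [ncard_edgeSet_cycleGraph] at this
    omega
end

section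
/- For n ≥ 2 and t ≥ 3, the complete bipartite graph K_{n,t} satisfies md(K_{n,t}) = 1. -/
/-!
If colour `i` separates `u` from `v`, then every common neighbour `w` sees colour `i` on `uw`
or on `vw`. Let `x ≠ x'` lie on the side with at least two vertices. Were they separated by two
colours `i ≠ j`, each vertex `y` of the other side would carry the pattern `(i, j)` or `(j, i)` on
`(xy, x'y)`; among three such vertices two share a pattern, and the colour separating these two
would then be both `c(xy)` and `c(x'y)`, which differ. So `x` and `x'` are separated by a unique
colour, and comparing it with the colour separating `x` from any `y` shows that every edge at `x`
carries it. Hence all edges get the same colour.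
-/

open Sum

namespace SimpleGraph

variable {V : Type*}

abbrev deleteColor (G : SimpleGraph V) (c : Sym2 V → ℕ) (i : ℕ) : SimpleGraph V :=
  G.deleteEdges {e | c e = i}

section

variable {G : SimpleGraph V} {c : Sym2 V → ℕ} {i : ℕ} {u v w : V}

lemma color_eq_of_not_reachable_deleteColor (h : G.Adj u v)
    (hs : ¬(G.deleteColor c i).Reachable u v) : c s(u, v) = i := by
  by_contra hne
  exact hs (Adj.reachable ((deleteEdges_adj ..).mpr ⟨h, hne⟩))

lemma color_eq_or_color_eq_of_not_reachable_deleteColor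
    (hs : ¬(G.deleteColor c i).Reachable u v) (hu : G.Adj u w) (hv : G.Adj v w) :
    c s(u, w) = i ∨ c s(v, w) = i := by
  by_cases huw : (G.deleteColor c i).Reachable u w
  · exact Or.inr (color_eq_of_not_reachable_deleteColor hv fun hvw => hs (huw.trans hvw.symm))
  · exact Or.inl (color_eq_of_not_reachable_deleteColor hu huw)

lemma color_eq_of_isMDColoring_of_common_neighbors (hc : isMDColoring G c) (huv : u ≠ v)
    {w' : V} (hwu : G.Adj w u) (hwv : G.Adj w v) (hw'u : G.Adj w' u) (hw'v : G.Adj w' v)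
    (hw : c s(w, u) = c s(w, v)) (hw' : c s(w', u) = c s(w', v)) : c s(w, u) = c s(w', u) := by
  obtain ⟨l, hl⟩ := hc u v huv
  have hsep : ∀ {w}, G.Adj w u → G.Adj w v → c s(w, u) = c s(w, v) → c s(w, u) = l := by
    intro w hwu hwv hw
    rcases color_eq_or_color_eq_of_not_reachable_deleteColor hl hwu.symm hwv.symm with h | h
    · rwa [Sym2.eq_swap]
    · rwa [hw, Sym2.eq_swap]
  rw [hsep hwu hwv hw, hsep hw'u hw'v hw']

end

section completeBipartiteGraph

variable {W : Type*} {c : Sym2 (V ⊕ W) → ℕ}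

lemma eq_of_not_reachable_deleteColor_completeBipartiteGraph [Fintype W]
    (hW : 2 < Fintype.card W) (hc : isMDColoring (completeBipartiteGraph V W) c) {x x' : V}
    {i j : ℕ} (hi : ¬((completeBipartiteGraph V W).deleteColor c i).Reachable (inl x) (inl x'))
    (hj : ¬((completeBipartiteGraph V W).deleteColor c j).Reachable (inl x) (inl x')) :
    i = j := by
  by_contra hij
  have pattern : ∀ y, (c s(inl x, inr y) = i ∧ c s(inl x', inr y) = j) ∨
      (c s(inl x, inr y) = j ∧ c s(inl x', inr y) = i) := by
    intro y
    have hxy : (completeBipartiteGraph V W).Adj (inl x) (inr y) := by simp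
    have hx'y : (completeBipartiteGraph V W).Adj (inl x') (inr y) := by simp
    rcases color_eq_or_color_eq_of_not_reachable_deleteColor hi hxy hx'y with h | h <;>
      rcases color_eq_or_color_eq_of_not_reachable_deleteColor hj hxy hx'y with h' | h' <;>
      omega
  obtain ⟨y, y', hyy', hsame⟩ := Fintype.exists_ne_map_eq_of_card_lt
    (fun y => decide (c s(inl x, inr y) = i)) (by simpa using hW)
  simp only [decide_eq_decide] at hsame
  have := color_eq_of_isMDColoring_of_common_neighbors hc (u := inr y) (v := inr y')
    (w := inl x) (w' := inl x') (by simpa using hyy') (by simp) (by simp) (by simp) (by simp)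
  rcases pattern y with h | h <;> rcases pattern y' with h' | h' <;> omega

lemma color_eq_of_not_reachable_deleteColor_completeBipartiteGraph [Fintype W]
    (hW : 2 < Fintype.card W) (hc : isMDColoring (completeBipartiteGraph V W) c) {x x' : V}
    {i : ℕ} (hi : ¬((completeBipartiteGraph V W).deleteColor c i).Reachable (inl x) (inl x'))
    (y : W) : c s(inl x, inr y) = i := by
  obtain ⟨m, hm⟩ := hc (inl x) (inr y) inl_ne_inr
  have hxy : c s(inl x, inr y) = m := color_eq_of_not_reachable_deleteColor (by simp) hm
  rcases color_eq_or_color_eq_of_not_reachable_deleteColor hi (w := inr y) (by simp) (by simp)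
    with h | h
  · exact h
  by_cases hxx' : ((completeBipartiteGraph V W).deleteColor c m).Reachable (inl x) (inl x')
  · have hx'y : c s(inl x', inr y) = m :=
      color_eq_of_not_reachable_deleteColor (by simp) fun h' => hm (hxx'.trans h')
    omega
  · rw [hxy, eq_of_not_reachable_deleteColor_completeBipartiteGraph hW hc hxx' hi]

lemma exists_color_forall_mem_edgeSet_completeBipartiteGraph [Nontrivial V] [Fintype W]
    (hW : 2 < Fintype.card W) (hc : isMDColoring (completeBipartiteGraph V W) c) :
    ∃ k, ∀ e ∈ (completeBipartiteGraph V W).edgeSet, c e = k := by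
  obtain ⟨x₀, x₁, hx₀₁⟩ := exists_pair_ne V
  obtain ⟨k, hk⟩ := hc (inl x₀) (inl x₁) (by simpa using hx₀₁)
  have hcross : ∀ x y, c s(inl x, inr y) = k := by
    intro x y
    obtain rfl | hx := eq_or_ne x x₀
    · exact color_eq_of_not_reachable_deleteColor_completeBipartiteGraph hW hc hk y
    obtain ⟨k', hk'⟩ := hc (inl x₀) (inl x) (by simpa using hx.symm)
    have hx₀k' := color_eq_of_not_reachable_deleteColor_completeBipartiteGraph hW hc hk' y
    have hxk' := color_eq_of_not_reachable_deleteColor_completeBipartiteGraph hW hc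
      (fun h => hk' h.symm) y
    have hx₀k := color_eq_of_not_reachable_deleteColor_completeBipartiteGraph hW hc hk y
    omega
  refine ⟨k, Sym2.ind fun p q hpq => ?_⟩
  rcases p with x | y <;> rcases q with x' | y' <;> simp at hpq
  · exact hcross x y'
  · rw [Sym2.eq_swap]; exact hcross x' y

end completeBipartiteGraph

end SimpleGraph

section mdNum

variable {V : Type*} {G : SimpleGraph V}

lemma isMDColoring_const (G : SimpleGraph V) (k : ℕ) : isMDColoring G fun _ => k := by
  intro u v huv
  exact ⟨k, fun h => huv (by simpa using h)⟩

lemma mdNum_eq_one_of_forall_isMDColoring (hG : G.edgeSet.Nonempty)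
    (h : ∀ c, isMDColoring G c → ∃ k, ∀ e ∈ G.edgeSet, c e = k) : mdNum G = 1 := by
  have hset :
      {m | ∃ c : Sym2 V → ℕ, isMDColoring G c ∧ (c '' G.edgeSet).ncard = m} = {1} := by
    ext m
    constructor
    · rintro ⟨c, hc, rfl⟩
      obtain ⟨k, hk⟩ := h c hc
      have himage : c '' G.edgeSet = {k} :=
        Set.eq_singleton_iff_nonempty_unique_mem.mpr
          ⟨hG.image c, by rintro _ ⟨e, he, rfl⟩; exact hk e he⟩
      rw [Set.mem_singleton_iff, himage, Set.ncard_singleton]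
    · rintro rfl
      exact ⟨fun _ => 0, isMDColoring_const G 0, by rw [hG.image_const, Set.ncard_singleton]⟩
  rw [mdNum, hset, csSup_singleton]

end mdNum

theorem completeBipartite_md (n t : ℕ) (hn : 2 ≤ n) (ht : 3 ≤ t) :
    mdNum (completeBipartiteGraph (Fin n) (Fin t)) = 1 := by
  have : Nontrivial (Fin n) := Fin.nontrivial_iff_two_le.mpr hn
  have hedge : s(inl ⟨0, by omega⟩, inr ⟨0, by omega⟩) ∈
      (completeBipartiteGraph (Fin n) (Fin t)).edgeSet := by simp
  exact mdNum_eq_one_of_forall_isMDColoring ⟨_, hedge⟩ fun c hc =>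
    SimpleGraph.exists_color_forall_mem_edgeSet_completeBipartiteGraph
      (by rw [Fintype.card_fin]; omega) hc
end

section
/- Let G be a connected graph and v a vertex of G that is neither a pendent vertex (degree 1) nor a cut-vertex. Then md(G) ≤ md(G - v). -/
namespace SimpleGraph

variable {V W : Type*} {G : SimpleGraph V}

lemma Hom.reachable_deleteEdges {H : SimpleGraph W} (f : H →g G) {S : Set (Sym2 V)} {a b : W}
    (h : (H.deleteEdges (Sym2.map f ⁻¹' S)).Reachable a b) :
    (G.deleteEdges S).Reachable (f a) (f b) :=
  h.map (G := H.deleteEdges _) (G' := G.deleteEdges S)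
    ⟨f, fun hab ↦ deleteEdges_adj.mpr ⟨f.map_adj hab.1, (deleteEdges_adj.mp hab).2⟩⟩

lemma reachable_deleteEdges_of_adj {S : Set (Sym2 V)} {a b : V} (hab : G.Adj a b)
    (hS : s(a, b) ∉ S) : (G.deleteEdges S).Reachable a b :=
  (deleteEdges_adj.mpr ⟨hab, hS⟩).reachable

lemma reachable_deleteEdges_of_connected_induce {s : Set V} {S : Set (Sym2 V)}
    (hs : (G.induce s).Connected) (hS : ∀ e ∈ (G.induce s).edgeSet, Sym2.map (↑) e ∉ S)
    {a b : V} (ha : a ∈ s) (hb : b ∈ s) : (G.deleteEdges S).Reachable a b :=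
  (hs.preconnected ⟨a, ha⟩ ⟨b, hb⟩).map
    ⟨Subtype.val, fun hab ↦ deleteEdges_adj.mpr ⟨hab, hS s(_, _) hab⟩⟩

end SimpleGraph

open SimpleGraph

section

variable {V W : Type*} {G : SimpleGraph V} {c : Sym2 V → ℕ}

lemma isMDColoring.comp_embedding {H : SimpleGraph W} (hc : isMDColoring G c) (f : H ↪g G) :
    isMDColoring H (c ∘ Sym2.map f) := fun a b hab ↦ by
  obtain ⟨i, hi⟩ := hc (f a) (f b) (f.injective.ne hab)
  exact ⟨i, fun h ↦ hi (f.toHom.reachable_deleteEdges h)⟩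

lemma isMDColoring.ncard_image_edgeSet_le_mdNum [Finite V] (hc : isMDColoring G c) :
    (c '' G.edgeSet).ncard ≤ mdNum G := by
  refine le_csSup ⟨Nat.card (Sym2 V), ?_⟩ ⟨c, hc, rfl⟩
  rintro _ ⟨c', -, rfl⟩
  exact (Set.ncard_image_le (Set.toFinite _)).trans (Set.ncard_le_card _)

lemma mdNum_le_of_forall_isMDColoring {n : ℕ}
    (h : ∀ c, isMDColoring G c → (c '' G.edgeSet).ncard ≤ n) : mdNum G ≤ n :=
  csSup_le' <| by rintro _ ⟨c, hc, rfl⟩; exact h c hc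

lemma isMDColoring.color_mem_image_induce_compl {v x : V} [Fintype (G.neighborSet v)]
    (hc : isMDColoring G c) (hpend : G.degree v ≠ 1) (hcut : (G.induce ({v}ᶜ : Set V)).Connected)
    (hvx : G.Adj v x) :
    c s(v, x) ∈ (c ∘ Sym2.map Subtype.val) '' (G.induce ({v}ᶜ : Set V)).edgeSet := by
  by_contra hcon
  set i := c s(v, x)
  have hreach : ∀ a b, a ≠ v → b ≠ v → (G.deleteEdges {e | c e = i}).Reachable a b :=
    fun a b ha hb ↦ reachable_deleteEdges_of_connected_induce hcut
      (fun e he hei ↦ hcon ⟨e, he, hei⟩) ha hb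
  obtain ⟨j, hj⟩ := hc v x hvx.ne
  obtain rfl : i = j := by_contra fun hij ↦ hj (reachable_deleteEdges_of_adj hvx hij)
  have hcolor_at_v : ∀ y, G.Adj v y → c s(v, y) = i := fun y hvy ↦ by_contra fun hy ↦
    hj ((reachable_deleteEdges_of_adj hvy hy).trans (hreach y x hvy.ne' hvx.ne'))
  have hdeg : 1 < G.degree v := by
    have := (G.degree_pos_iff_exists_adj v).mpr ⟨x, hvx⟩
    omega
  obtain ⟨y, hvy, hyx⟩ := Finset.exists_mem_ne hdeg x
  rw [mem_neighborFinset] at hvy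
  obtain ⟨k, hk⟩ := hc x y hyx.symm
  rcases eq_or_ne i k with rfl | hik
  · exact hk (hreach x y hvx.ne' hvy.ne')
  · refine hk ((reachable_deleteEdges_of_adj hvx.symm ?_).trans
      (reachable_deleteEdges_of_adj hvy ?_))
    · rwa [Sym2.eq_swap]
    · simpa [hcolor_at_v y hvy] using hik

lemma isMDColoring.image_edgeSet_subset_image_induce_compl {v : V} [Fintype (G.neighborSet v)]
    (hc : isMDColoring G c) (hpend : G.degree v ≠ 1)
    (hcut : (G.induce ({v}ᶜ : Set V)).Connected) :
    c '' G.edgeSet ⊆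
      (c ∘ Sym2.map Subtype.val) '' (G.induce ({v}ᶜ : Set V)).edgeSet := by
  rintro _ ⟨e, he, rfl⟩
  induction e using Sym2.ind with | h p q => ?_
  by_cases hp : p = v
  · subst hp
    exact hc.color_mem_image_induce_compl hpend hcut he
  by_cases hq : q = v
  · subst hq
    rw [Sym2.eq_swap]
    exact hc.color_mem_image_induce_compl hpend hcut he.symm
  exact ⟨s(⟨p, hp⟩, ⟨q, hq⟩), he, rfl⟩

end

theorem delete_vertex_md_general {V : Type*} [Fintype V]
    (G : SimpleGraph V) [DecidableRel G.Adj] (v : V)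
    (hpend : G.degree v ≠ 1)
    (hcut : (G.induce ({v}ᶜ : Set V)).Connected) :
    mdNum G ≤ mdNum (G.induce ({v}ᶜ : Set V)) :=
  mdNum_le_of_forall_isMDColoring fun c hc ↦
    calc (c '' G.edgeSet).ncard
        ≤ ((c ∘ Sym2.map Subtype.val) '' (G.induce ({v}ᶜ : Set V)).edgeSet).ncard :=
          Set.ncard_le_ncard (hc.image_edgeSet_subset_image_induce_compl hpend hcut)
            (Set.toFinite _)
      _ ≤ mdNum (G.induce ({v}ᶜ : Set V)) :=
          (hc.comp_embedding (Embedding.induce {v}ᶜ)).ncard_image_edgeSet_le_mdNum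

theorem delete_vertex_md {V : Type*} [Fintype V] [DecidableEq V]
    (G : SimpleGraph V) [DecidableRel G.Adj] (hG : G.Connected) (v : V)
    (hpend : G.degree v ≠ 1)
    (hcut : (G.induce ({v}ᶜ : Set V)).Connected) :
    mdNum G ≤ mdNum (G.induce ({v}ᶜ : Set V)) :=
  delete_vertex_md_general G v hpend hcut
end

section
/- For a connected graph G and any integer r with 1 ≤ r ≤ md(G), there exists an MD-coloring of G using exactly r colors. -/
theorem Nat.sSup_mem_of_ne_zero {s : Set ℕ} (h : sSup s ≠ 0) : sSup s ∈ s := by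
  refine Nat.sSup_mem ?_ ?_
  · rw [Set.nonempty_iff_ne_empty]
    rintro rfl
    exact h csSup_empty
  · by_contra hs
    exact h (Nat.sSup_of_not_bddAbove hs)

theorem Set.exists_image_eq_of_subset {α : Type*} {A B : Set α} (hBA : B ⊆ A)
    (hB : B.Nonempty) : ∃ f : α → α, f '' A = B := by
  classical
  obtain ⟨b, hb⟩ := hB
  refine ⟨fun x => if x ∈ B then x else b, Set.Subset.antisymm ?_ ?_⟩
  · rintro _ ⟨x, -, rfl⟩
    dsimp only
    split_ifs with hx
    exacts [hx, hb]
  · exact fun x hx => ⟨x, hBA hx, if_pos hx⟩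

theorem isMDColoring.comp {V : Type*} {G : SimpleGraph V} {c : Sym2 V → ℕ}
    (hc : isMDColoring G c) (f : ℕ → ℕ) : isMDColoring G (f ∘ c) := by
  intro u v huv
  obtain ⟨j, hj⟩ := hc u v huv
  refine ⟨f j, fun hreach => hj (hreach.mono (SimpleGraph.deleteEdges_anti ?_))⟩
  intro e (he : c e = j)
  simp [he]

theorem exists_isMDColoring_ncard_eq_mdNum {V : Type*} {G : SimpleGraph V} (h : mdNum G ≠ 0) :
    ∃ c : Sym2 V → ℕ, isMDColoring G c ∧ (c '' G.edgeSet).ncard = mdNum G :=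
  Nat.sSup_mem_of_ne_zero h

theorem md_coloring_exists_general {V : Type*} (G : SimpleGraph V)
    (r : ℕ) (h1 : 1 ≤ r) (h2 : r ≤ mdNum G) :
    ∃ c : Sym2 V → ℕ, isMDColoring G c ∧ (c '' G.edgeSet).ncard = r := by
  obtain ⟨c, hc, hcard⟩ := exists_isMDColoring_ncard_eq_mdNum (G := G) (by omega)
  obtain ⟨B, hBc, hBcard⟩ := Set.exists_subset_card_eq (hcard.symm ▸ h2)
  obtain ⟨f, hf⟩ := Set.exists_image_eq_of_subset hBc (Set.nonempty_of_ncard_ne_zero (by omega))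
  exact ⟨f ∘ c, hc.comp f, by rw [Set.image_comp, hf, hBcard]⟩

theorem md_coloring_exists {V : Type*} [Fintype V] (G : SimpleGraph V)
    (hG : G.Connected) (r : ℕ) (h1 : 1 ≤ r) (h2 : r ≤ mdNum G) :
    ∃ c : Sym2 V → ℕ, isMDColoring G c ∧ (c '' G.edgeSet).ncard = r :=
  md_coloring_exists_general G r h1 h2
end

section
/- There exists a connected graph H on n vertices (n even, n ≥ 4) with minimum degree δ(H) = n/2 and md(H) ≥ 2; namely, take two disjoint copies of K_{n/2} joined by a perfect matching across. -/
/-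
The graph is `K_m □ K_2`. Colour an edge `0` if it stays inside a copy of `K_m` and `1` if it
is a matching edge. Deleting the matching edges leaves the two copies disconnected from each
other; deleting the clique edges leaves only the matching, so distinct vertices of the same
copy are disconnected. The same works for any graph mapped injectively into a product so that
every edge changes only one coordinate.
-/

open SimpleGraph

section

variable {V : Type*} {G : SimpleGraph V}

lemma SimpleGraph.not_reachable_of_apply_ne {β : Type*} (f : V → β)
    (hf : ∀ ⦃a b⦄, G.Adj a b → f a = f b) {u v : V} (huv : f u ≠ f v) : ¬ G.Reachable u v := by
  rintro ⟨p⟩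
  induction p with
  | nil => exact huv rfl
  | cons h _ ih => exact ih (by rwa [← hf h])

lemma SimpleGraph.Iso.ncard_neighborSet {W : Type*} {G' : SimpleGraph W} (f : G ≃g G') (v : V) :
    (G'.neighborSet (f v)).ncard = (G.neighborSet v).ncard := by
  simp only [← Nat.card_coe_set_eq]
  exact Nat.card_congr (f.mapNeighborSet v).symm

lemma le_mdNum [Finite V] {c : Sym2 V → ℕ} (hc : isMDColoring G c) :
    (c '' G.edgeSet).ncard ≤ mdNum G := by
  refine le_csSup ⟨Nat.card (Sym2 V), ?_⟩ ⟨c, hc, rfl⟩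
  rintro _ ⟨c', -, rfl⟩
  exact (Set.ncard_image_le (Set.toFinite _)).trans (Set.ncard_le_card _)

theorem two_le_mdNum_of_edges_move_one_coordinate [Finite V] {α β : Type*} (φ : V → α × β)
    (hφ : Function.Injective φ)
    (hadj : ∀ ⦃u v⦄, G.Adj u v → (φ u).1 = (φ v).1 ∨ (φ u).2 = (φ v).2)
    (h₀ : ∃ u v, G.Adj u v ∧ (φ u).2 = (φ v).2) (h₁ : ∃ u v, G.Adj u v ∧ (φ u).2 ≠ (φ v).2) :
    2 ≤ mdNum G := by
  classical
  let c : Sym2 V → ℕ :=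
    Sym2.lift ⟨fun u v => if (φ u).2 = (φ v).2 then 0 else 1, fun _ _ => by simp only [eq_comm]⟩
  have hc : ∀ u v, c s(u, v) = if (φ u).2 = (φ v).2 then 0 else 1 := fun _ _ => rfl
  have hMD : isMDColoring G c := by
    intro u v huv
    by_cases h₂ : (φ u).2 = (φ v).2
    · refine ⟨0, not_reachable_of_apply_ne (fun w => (φ w).1) ?_ ?_⟩
      · intro a b hab
        rw [deleteEdges_adj, Set.mem_ofPred_eq, hc] at hab
        exact (hadj hab.1).resolve_right fun h => hab.2 (if_pos h)
      · exact fun h₁ => huv (hφ (Prod.ext h₁ h₂))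
    · refine ⟨1, not_reachable_of_apply_ne (fun w => (φ w).2) ?_ h₂⟩
      intro a b hab
      rw [deleteEdges_adj, Set.mem_ofPred_eq, hc] at hab
      exact not_not.mp fun h => hab.2 (if_neg h)
  have hcolors : 1 < (c '' G.edgeSet).ncard := by
    obtain ⟨u₀, v₀, hadj₀, heq⟩ := h₀
    obtain ⟨u₁, v₁, hadj₁, hne⟩ := h₁
    exact (Set.one_lt_ncard_iff (Set.toFinite _)).mpr
      ⟨0, 1, ⟨s(u₀, v₀), hadj₀, by rw [hc, if_pos heq]⟩, ⟨s(u₁, v₁), hadj₁, by rw [hc, if_neg hne]⟩,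
        zero_ne_one⟩
  exact hcolors.trans_le (le_mdNum hMD)

end

lemma ncard_neighborSet_boxProd_top {m : ℕ} (hm : 1 ≤ m) (x : Fin m × Fin 2) :
    ((⊤ □ ⊤ : SimpleGraph (Fin m × Fin 2)).neighborSet x).ncard = m := by
  classical
  rw [Set.ncard_eq_toFinset_card', Set.toFinset_card, card_neighborSet_eq_degree, degree_boxProd,
    complete_graph_degree, complete_graph_degree, Fintype.card_fin, Fintype.card_fin]
  omega

theorem sharp_example (n : ℕ) (hn : 4 ≤ n) (he : Even n) :
    ∃ H : SimpleGraph (Fin n), H.Connected ∧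
      (∀ v, n / 2 ≤ (H.neighborSet v).ncard) ∧
      (∃ v, (H.neighborSet v).ncard = n / 2) ∧
      2 ≤ mdNum H := by
  obtain ⟨m, rfl⟩ := he
  have hm : 2 ≤ m := by omega
  have : Nonempty (Fin m) := ⟨⟨0, by omega⟩⟩
  let e : Fin (m + m) ≃ Fin m × Fin 2 := (finCongr (by omega)).trans finProdFinEquiv.symm
  let K : SimpleGraph (Fin m × Fin 2) := ⊤ □ ⊤
  let iso := Iso.comap e K
  have hdeg (v : Fin (m + m)) : ((K.comap e).neighborSet v).ncard = (m + m) / 2 := by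
    rw [← iso.ncard_neighborSet, ncard_neighborSet_boxProd_top (by omega)]
    omega
  refine ⟨K.comap e, iso.connected_iff.mpr (connected_boxProd.mpr ⟨connected_top, connected_top⟩),
    fun v => (hdeg v).ge, ⟨e.symm (⟨0, by omega⟩, 0), hdeg _⟩, ?_⟩
  refine two_le_mdNum_of_edges_move_one_coordinate e e.injective
    (fun u v huv => (boxProd_adj.mp huv).symm.imp And.right And.right) ?_ ?_
  · refine ⟨e.symm (⟨0, by omega⟩, 0), e.symm (⟨1, by omega⟩, 0), ?_, by simp⟩
    simp [K, boxProd_adj, Fin.ext_iff]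
  · refine ⟨e.symm (⟨0, by omega⟩, 0), e.symm (⟨0, by omega⟩, 1), ?_, by simp⟩
    simp [K, boxProd_adj]
end

section
/- Let G be a connected graph with n vertices and r blocks. Then the number of edges of G satisfies e(G) ≤ C(n - r + 1, 2) + r - 1. -/
/-- A block of G: a maximal connected subgraph without a cut-vertex. -/
def IsBlock {V : Type*} (G : SimpleGraph V) (B : G.Subgraph) : Prop :=
  B.coe.Connected ∧ (∀ v : V, (B.deleteVerts {v}).coe.Preconnected) ∧
    ∀ B' : G.Subgraph, B'.coe.Connected →
      (∀ v : V, (B'.deleteVerts {v}).coe.Preconnected) → B ≤ B' → B = B'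

/-!
Split a connected graph with a cut vertex `v` into two connected pieces that share only `v`:
their edge sets partition the edges, their orders add up to `n + 1`, and every block lies in
one of them, so `r ≤ r₁ + r₂`. Strong induction on the order then reduces the bound to the
convexity inequality `C(a+2, 2) + C(b+2, 2) + d ≤ C(a+b+d+2, 2) + 1`; a graph without cut
vertex is its own unique block and has at most `C(n, 2)` edges. The induction runs over
subgraphs of the fixed graph `G`, so blocks never have to be transported to another vertex type.
-/

theorem Nat.choose_two_add_choose_two_add_le (a b d : ℕ) :
    (a + 2).choose 2 + (b + 2).choose 2 + d ≤ (a + b + d + 2).choose 2 + 1 := by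
  have key : (((a + 2).choose 2 + (b + 2).choose 2 + d : ℕ) : ℚ)
      ≤ ((a + b + d + 2).choose 2 + 1 : ℕ) := by
    push_cast [Nat.cast_choose_two]
    ring_nf
    have ha : (0 : ℚ) ≤ a := a.cast_nonneg
    have hb : (0 : ℚ) ≤ b := b.cast_nonneg
    have hd : (0 : ℚ) ≤ d := d.cast_nonneg
    nlinarith [mul_nonneg ha hb, mul_nonneg ha hd, mul_nonneg hb hd, mul_nonneg hd hd]
  exact_mod_cast key

/-- The inductive invariant for order `n`, number of blocks `r` and size `e`. The clause `r < n`
is carried along because merging two pieces needs `n - r ≥ 1` on both sides. -/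
def BlockEdgeBound (n r e : ℕ) : Prop :=
  (2 ≤ n → r < n) ∧ e + 1 ≤ (n - r + 1).choose 2 + r

lemma BlockEdgeBound.add {n₁ n₂ n r₁ r₂ r e₁ e₂ : ℕ} (h₁ : BlockEdgeBound n₁ r₁ e₁)
    (h₂ : BlockEdgeBound n₂ r₂ e₂) (hn₁ : 2 ≤ n₁) (hn₂ : 2 ≤ n₂) (hn : n + 1 = n₁ + n₂)
    (hr : r ≤ r₁ + r₂) : BlockEdgeBound n r (e₁ + e₂) := by
  obtain ⟨hr₁, he₁⟩ := h₁
  obtain ⟨hr₂, he₂⟩ := h₂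
  obtain ⟨a, rfl⟩ : ∃ a, n₁ = r₁ + 1 + a := ⟨n₁ - r₁ - 1, by omega⟩
  obtain ⟨b, rfl⟩ : ∃ b, n₂ = r₂ + 1 + b := ⟨n₂ - r₂ - 1, by omega⟩
  obtain ⟨d, hd⟩ : ∃ d, r₁ + r₂ = r + d := ⟨r₁ + r₂ - r, by omega⟩
  rw [show r₁ + 1 + a - r₁ + 1 = a + 2 by omega] at he₁
  rw [show r₂ + 1 + b - r₂ + 1 = b + 2 by omega] at he₂
  refine ⟨fun _ => by omega, ?_⟩
  rw [show n - r + 1 = a + b + d + 2 by omega]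
  have := Nat.choose_two_add_choose_two_add_le a b d
  omega

namespace SimpleGraph.Subgraph

variable {V : Type*} {G : SimpleGraph V}

def IsNonseparable (B : G.Subgraph) : Prop :=
  B.Connected ∧ ∀ v, (B.deleteVerts {v}).Preconnected

def blocks (H : G.Subgraph) : Set G.Subgraph :=
  {B | Maximal (fun B => B ≤ H ∧ B.IsNonseparable) B}

lemma mem_blocks {H B : G.Subgraph} :
    B ∈ H.blocks ↔ Maximal (fun B => B ≤ H ∧ B.IsNonseparable) B := Iff.rfl

lemma _root_.isBlock_iff_mem_blocks_top {B : G.Subgraph} :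
    IsBlock G B ↔ B ∈ (⊤ : G.Subgraph).blocks := by
  simp only [IsBlock, blocks, IsNonseparable, Maximal, le_top, true_and, Set.mem_ofPred_eq,
    Subgraph.connected_iff', Subgraph.preconnected_iff, and_imp]
  exact ⟨fun ⟨h₁, h₂, hmax⟩ => ⟨⟨h₁, h₂⟩, fun B' h₁' h₂' hle => (hmax B' h₁' h₂' hle).ge⟩,
    fun ⟨⟨h₁, h₂⟩, hmax⟩ => ⟨h₁, h₂, fun _ h₁' h₂' hle => le_antisymm hle (hmax h₁' h₂' hle)⟩⟩

lemma isNonseparable_singletonSubgraph (v : V) : (G.singletonSubgraph v).IsNonseparable := by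
  refine ⟨singletonSubgraph_connected, fun w => ?_⟩
  have : Subsingleton ((G.singletonSubgraph v).deleteVerts {w}).verts :=
    ⟨fun x y => Subtype.ext (x.2.1.trans y.2.1.symm)⟩
  exact ⟨Preconnected.of_subsingleton⟩

lemma blocks_nonempty [Finite V] {H : G.Subgraph} (hH : H.verts.Nonempty) :
    H.blocks.Nonempty := by
  obtain ⟨v, hv⟩ := hH
  obtain ⟨B, -, hB⟩ := Finite.exists_le_maximal (p := fun B => B ≤ H ∧ B.IsNonseparable)
    ⟨(singletonSubgraph_le_iff v H).2 hv, isNonseparable_singletonSubgraph v⟩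
  exact ⟨B, hB⟩

lemma IsNonseparable.blocks_eq {H : G.Subgraph} (hH : H.IsNonseparable) : H.blocks = {H} := by
  ext B
  refine ⟨fun hB => (mem_blocks.1 hB).eq_of_le ⟨le_rfl, hH⟩ hB.1.1, ?_⟩
  rintro rfl
  exact ⟨⟨le_rfl, hH⟩, fun _ hK _ => hK.1⟩

lemma mem_blocks_of_le {H K B : G.Subgraph} (hB : B ∈ H.blocks) (hBK : B ≤ K) (hKH : K ≤ H) :
    B ∈ K.blocks :=
  ⟨⟨hBK, hB.1.2⟩, fun _ hC => hB.2 ⟨hC.1.trans hKH, hC.2⟩⟩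

lemma ncard_edgeSet_le_choose_two [Finite V] (H : G.Subgraph) :
    H.edgeSet.ncard ≤ H.verts.ncard.choose 2 := by
  classical
  have := Fintype.ofFinite H.verts
  rw [← H.image_coe_edgeSet_coe, Set.ncard_image_of_injective _
    (Sym2.map.injective Subtype.val_injective), ← coe_edgeFinset, Set.ncard_coe_finset,
    ← Nat.card_coe_set_eq, Nat.card_eq_fintype_card]
  exact card_edgeFinset_le_card_choose_two

/-- `S` is a union of components of `H - v`. -/
def AdjClosedAwayFrom (H : G.Subgraph) (v : V) (S : Set V) : Prop :=
  ∀ ⦃x y⦄, x ∈ S → H.Adj x y → y ≠ v → y ∈ S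

section AdjClosedAwayFrom

variable {H : G.Subgraph} {v : V} {S : Set V}

lemma AdjClosedAwayFrom.mem_of_walk (hS : H.AdjClosedAwayFrom v S) {x y : V} (p : G.Walk x y)
    (hp : p.toSubgraph ≤ H.deleteVerts {v}) (hx : x ∈ S) : y ∈ S := by
  induction p with
  | nil => exact hx
  | cons h p ih =>
    rw [Walk.toSubgraph, sup_le_iff, subgraphOfAdj_le_iff, deleteVerts_adj] at hp
    obtain ⟨⟨-, -, -, hv, hadj⟩, hp⟩ := hp
    exact ih hp (hS hx hadj hv)

lemma AdjClosedAwayFrom.diff (hS : H.AdjClosedAwayFrom v S) :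
    H.AdjClosedAwayFrom v ((H.verts \ S) \ {v}) := by
  rintro x y ⟨⟨-, hxS⟩, hxv⟩ hxy hyv
  exact ⟨⟨hxy.snd_mem, fun hyS => hxS (hS hyS hxy.symm hxv)⟩, hyv⟩

lemma AdjClosedAwayFrom.exists_walk_induce_insert (hS : H.AdjClosedAwayFrom v S) {x : V}
    (p : G.Walk x v) (hp : p.toSubgraph ≤ H) (hx : x ∈ insert v S) :
    ∃ q : G.Walk x v, q.toSubgraph ≤ H.induce (insert v S) := by
  induction p with
  | nil => exact ⟨Walk.nil, (singletonSubgraph_le_iff _ _).2 hx⟩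
  | @cons x z w h p ih =>
    rcases eq_or_ne x w with rfl | hxw
    · exact ⟨Walk.nil, (singletonSubgraph_le_iff _ _).2 hx⟩
    rw [Walk.toSubgraph, sup_le_iff, subgraphOfAdj_le_iff] at hp
    have hz : z ∈ insert w S := by
      rcases eq_or_ne z w with rfl | hzw
      · exact Set.mem_insert _ _
      · exact Or.inr (hS (hx.resolve_left hxw) hp.1 hzw)
    obtain ⟨q, hq⟩ := ih hS hp.2 hz
    refine ⟨Walk.cons h q, ?_⟩
    rw [Walk.toSubgraph, sup_le_iff, subgraphOfAdj_le_iff]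
    exact ⟨⟨hx, hz, hp.1⟩, hq⟩

lemma AdjClosedAwayFrom.connected_induce_insert (hS : H.AdjClosedAwayFrom v S)
    (hH : H.Connected) (hv : v ∈ H.verts) (hSH : S ⊆ H.verts) :
    (H.induce (insert v S)).Connected := by
  have toV (x) (hx : x ∈ insert v S) :
      ∃ q : G.Walk x v, q.toSubgraph ≤ H.induce (insert v S) := by
    obtain ⟨p, hp⟩ := ((connected_iff_forall_exists_walk_subgraph H).1 hH).2
      (Set.insert_subset hv hSH hx) hv
    exact hS.exists_walk_induce_insert p hp hx
  rw [connected_iff_forall_exists_walk_subgraph]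
  refine ⟨⟨v, Set.mem_insert _ _⟩, fun {u w} hu hw => ?_⟩
  obtain ⟨p, hp⟩ := toV u hu
  obtain ⟨q, hq⟩ := toV w hw
  refine ⟨p.append q.reverse, ?_⟩
  rw [Walk.toSubgraph_append, Walk.toSubgraph_reverse]
  exact sup_le hp hq

lemma AdjClosedAwayFrom.connected_induce_diff (hS : H.AdjClosedAwayFrom v S)
    (hH : H.Connected) (hv : v ∈ H.verts) (hvS : v ∉ S) :
    (H.induce (H.verts \ S)).Connected := by
  have hdiff : H.verts \ S = insert v ((H.verts \ S) \ {v}) := by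
    rw [Set.insert_sdiff_singleton, Set.insert_eq_of_mem (Set.mem_sdiff_of_mem hv hvS)]
  rw [hdiff]
  exact hS.diff.connected_induce_insert hH hv (Set.sdiff_subset.trans Set.sdiff_subset)

lemma AdjClosedAwayFrom.edgeSet_eq_union (hS : H.AdjClosedAwayFrom v S) :
    H.edgeSet = (H.induce (insert v S)).edgeSet ∪ (H.induce (H.verts \ S)).edgeSet := by
  ext e
  induction e using Sym2.ind with
  | h x y =>
  rw [Set.mem_union]
  refine ⟨fun hxy => ?_, by rintro (⟨-, -, h⟩ | ⟨-, -, h⟩) <;> exact h⟩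
  by_cases hxS : x ∈ S
  · exact Or.inl ⟨Or.inr hxS, (eq_or_ne y v).imp_right (hS hxS hxy), hxy⟩
  by_cases hyS : y ∈ S
  · exact Or.inl ⟨(eq_or_ne x v).imp_right (hS hyS hxy.symm), Or.inr hyS, hxy⟩
  exact Or.inr ⟨⟨hxy.fst_mem, hxS⟩, ⟨hxy.snd_mem, hyS⟩, hxy⟩

lemma disjoint_edgeSet_induce_insert_diff (H : G.Subgraph) :
    Disjoint (H.induce (insert v S)).edgeSet (H.induce (H.verts \ S)).edgeSet := by
  rw [Set.disjoint_left]
  intro e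
  induction e using Sym2.ind with
  | h x y =>
  rintro ⟨hx, hy, hxy⟩ ⟨⟨-, hxS⟩, ⟨-, hyS⟩, -⟩
  rw [hx.resolve_right hxS, hy.resolve_right hyS] at hxy
  exact hxy.ne rfl

lemma AdjClosedAwayFrom.ncard_edgeSet [Finite V] (hS : H.AdjClosedAwayFrom v S) :
    H.edgeSet.ncard =
      (H.induce (insert v S)).edgeSet.ncard + (H.induce (H.verts \ S)).edgeSet.ncard := by
  rw [hS.edgeSet_eq_union, Set.ncard_union_eq (disjoint_edgeSet_induce_insert_diff H)]

lemma AdjClosedAwayFrom.le_induce_or_le_induce (hS : H.AdjClosedAwayFrom v S) (hvS : v ∉ S)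
    {B : G.Subgraph} (hB : B.IsNonseparable) (hBH : B ≤ H) :
    B ≤ H.induce (insert v S) ∨ B ≤ H.induce (H.verts \ S) := by
  suffices B.verts ⊆ insert v S ∨ B.verts ⊆ H.verts \ S by
    rw [← B.induce_self_verts]
    exact this.imp (induce_mono hBH) (induce_mono hBH)
  by_contra! h
  obtain ⟨x, hxB, hx⟩ := Set.not_subset.1 h.1
  obtain ⟨y, hyB, hy⟩ := Set.not_subset.1 h.2
  have hyS : y ∈ S := by_contra fun hyS => hy ⟨hBH.1 hyB, hyS⟩
  have hyv : y ≠ v := fun hyv => hvS (hyv ▸ hyS)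
  have hxv : x ≠ v := fun hxv => hx (hxv ▸ Set.mem_insert _ _)
  obtain ⟨p, hp⟩ := (preconnected_iff_forall_exists_walk_subgraph _).1 (hB.2 v)
    (show y ∈ (B.deleteVerts {v}).verts from ⟨hyB, hyv⟩) ⟨hxB, hxv⟩
  exact hx (Or.inr (hS.mem_of_walk p (hp.trans (deleteVerts_mono hBH)) hyS))

lemma AdjClosedAwayFrom.blocks_subset_union (hS : H.AdjClosedAwayFrom v S) (hv : v ∈ H.verts)
    (hSH : S ⊆ H.verts) (hvS : v ∉ S) :
    H.blocks ⊆ (H.induce (insert v S)).blocks ∪ (H.induce (H.verts \ S)).blocks := by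
  intro B hB
  have hle {s : Set V} (hs : s ⊆ H.verts) : H.induce s ≤ H :=
    (induce_mono_right hs).trans_eq H.induce_self_verts
  exact (hS.le_induce_or_le_induce hvS hB.1.2 hB.1.1).imp
    (fun h => mem_blocks_of_le hB h (hle (Set.insert_subset hv hSH)))
    (fun h => mem_blocks_of_le hB h (hle Set.sdiff_subset))

end AdjClosedAwayFrom

lemma exists_adjClosedAwayFrom_of_not_isNonseparable {H : G.Subgraph} (hH : H.Connected)
    (h : ¬H.IsNonseparable) :
    ∃ v ∈ H.verts, ∃ S ⊆ H.verts, H.AdjClosedAwayFrom v S ∧ v ∉ S ∧ S.Nonempty ∧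
      ∃ b ∈ H.verts, b ∉ insert v S := by
  obtain ⟨v, hv⟩ : ∃ v, ¬(H.deleteVerts {v}).Preconnected := by
    simpa [IsNonseparable, hH] using h
  simp only [preconnected_iff_forall_exists_walk_subgraph, not_forall, not_exists] at hv
  obtain ⟨a, b, ha, hb, hab⟩ := hv
  have hvH : v ∈ H.verts := by
    by_contra hvH
    have hdel : H.deleteVerts {v} = H := by
      rw [← deleteVerts_inter_verts_left_eq, Set.inter_singleton_eq_empty.2 hvH, deleteVerts_empty]
    obtain ⟨p, hp⟩ := ((connected_iff_forall_exists_walk_subgraph H).1 hH).2 ha.1 hb.1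
    exact hab p (by rwa [hdel])
  set S := {x | ∃ p : G.Walk a x, p.toSubgraph ≤ H.deleteVerts {v}}
  have hS : ∀ x ∈ S, x ∈ (H.deleteVerts {v}).verts := fun x ⟨p, hp⟩ =>
    hp.1 p.end_mem_verts_toSubgraph
  refine ⟨v, hvH, S, fun x hx => (hS x hx).1, fun x y hx hxy hyv => ?_, fun hv => (hS v hv).2 rfl,
    ⟨a, Walk.nil, (singletonSubgraph_le_iff _ _).2 ha⟩, b, hb.1, ?_⟩
  · obtain ⟨p, hp⟩ := hx
    refine ⟨p.concat hxy.adj_sub, ?_⟩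
    rw [Walk.concat, Walk.toSubgraph_append, Walk.toSubgraph, sup_le_iff, sup_le_iff,
      subgraphOfAdj_le_iff, deleteVerts_adj]
    exact ⟨hp, ⟨(hS x ⟨p, hp⟩).1, (hS x ⟨p, hp⟩).2, hxy.snd_mem, hyv, hxy⟩,
      (singletonSubgraph_le_iff _ _).2 ⟨hxy.snd_mem, hyv⟩⟩
  · rintro (rfl | ⟨p, hp⟩)
    · exact hb.2 rfl
    · exact hab p hp

theorem Connected.blockEdgeBound [Finite V] {H : G.Subgraph} (hH : H.Connected) :
    BlockEdgeBound H.verts.ncard H.blocks.ncard H.edgeSet.ncard := by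
  induction hn : H.verts.ncard using Nat.strong_induction_on generalizing H with
  | _ n ih =>
  by_cases hsep : H.IsNonseparable
  · have hpos : 1 ≤ n := hn ▸ (Set.ncard_pos H.verts.toFinite).2 hH.nonempty
    have he : H.edgeSet.ncard ≤ n.choose 2 := hn ▸ H.ncard_edgeSet_le_choose_two
    rw [hsep.blocks_eq, Set.ncard_singleton]
    refine ⟨fun _ => by omega, ?_⟩
    rw [Nat.sub_add_cancel hpos]
    omega
  obtain ⟨v, hv, S, hSH, hS, hvS, ⟨a, ha⟩, b, hb, hbS⟩ :=
    exists_adjClosedAwayFrom_of_not_isNonseparable hH hsep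
  have hn₁ : (insert v S).ncard = S.ncard + 1 := Set.ncard_insert_of_notMem hvS
  have hn₂ : (H.verts \ S).ncard = n - S.ncard := hn ▸ Set.ncard_sdiff hSH
  have hlt : (insert v S).ncard < n :=
    hn ▸ Set.ncard_lt_ncard (Set.ssubset_iff_subset_ne.2 ⟨Set.insert_subset hv hSH,
      fun h => hbS (h ▸ hb)⟩)
  have hSpos : 1 ≤ S.ncard := (Set.ncard_pos).2 ⟨a, ha⟩
  have h₁ : BlockEdgeBound (insert v S).ncard _ _ :=
    ih _ (by omega) (hS.connected_induce_insert hH hv hSH) rfl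
  have h₂ : BlockEdgeBound (H.verts \ S).ncard _ _ :=
    ih _ (by omega) (hS.connected_induce_diff hH hv hvS) rfl
  rw [hS.ncard_edgeSet]
  refine h₁.add h₂ (by omega) (by omega) (by omega) ?_
  exact (Set.ncard_le_ncard (hS.blocks_subset_union hv hSH hvS)).trans (Set.ncard_union_le _ _)

end SimpleGraph.Subgraph

open SimpleGraph Subgraph

theorem blocks_edge_bound {V : Type*} [Fintype V] (G : SimpleGraph V)
    (hG : G.Connected) (n r : ℕ) (hn : Fintype.card V = n)
    (hr : {B : G.Subgraph | IsBlock G B}.ncard = r) :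
    G.edgeSet.ncard ≤ (n - r + 1).choose 2 + r - 1 := by
  have htop : (⊤ : G.Subgraph).Connected := ⟨topIso.connected_iff.2 hG⟩
  have hblocks : (⊤ : G.Subgraph).blocks = {B | IsBlock G B} :=
    Set.ext fun _ => isBlock_iff_mem_blocks_top.symm
  have hpos : 1 ≤ r := hr ▸ hblocks ▸ (Set.ncard_pos (Set.toFinite _)).2
    (blocks_nonempty htop.nonempty)
  obtain ⟨-, hbound⟩ := htop.blockEdgeBound
  rw [hblocks, hr, Subgraph.edgeSet_top, verts_top, Set.ncard_univ, Nat.card_eq_fintype_card,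
    hn] at hbound
  omega
end

section
/- If G is a graph on n ≥ 4 vertices with e(G) ≥ C(n-1,2) + 2 edges, then md(G) = 1; moreover, this edge bound is sharp, since the graph obtained from K_{n-1} by attaching a pendent edge has C(n-1,2) + 1 edges and md equal to 2. -/
/-!
A colour `i` separating the ends of an edge `uv` must colour `uv` and one of the two other
edges of any triangle on `uv`; so in an MD-coloring all three edges of a triangle share a
colour. If `G` has at least `C(n-1,2) + 2` edges, its complement has at most `n - 3`, so any two
vertices have a common neighbour, and two edges `uv`, `uw` with `vw ∉ G` lie in triangles
through a common neighbour of `u, v, w`. Hence adjacent edges, and then all edges, share a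
colour. In `K_{n-1}` with a pendant edge the clique is monochromatic for the same reason, and
giving the pendant edge its own colour is an MD-coloring.
-/

open SimpleGraph Finset

variable {V : Type*} {G : SimpleGraph V} {c : Sym2 V → ℕ}

lemma Nat.choose_two_eq_pred_choose_two_add_pred (n : ℕ) :
    n.choose 2 = (n - 1).choose 2 + (n - 1) := by
  cases n with
  | zero => rfl
  | succ m => rw [Nat.choose_succ_succ', Nat.choose_one_right, Nat.add_sub_cancel, add_comm]

lemma SimpleGraph.not_reachable_of_forall_adj_mem {H : SimpleGraph V} {S : Set V}
    (hS : ∀ a b, H.Adj a b → a ∈ S → b ∈ S) {u v : V} (hu : u ∈ S) (hv : v ∉ S) :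
    ¬ H.Reachable u v := fun ⟨p⟩ =>
  let ⟨d, _, hd, hd'⟩ := p.exists_boundary_dart S hu hv
  hd' (hS _ _ d.adj hd)

lemma mdNum_eq_of_le {k : ℕ} (c : Sym2 V → ℕ) (hc : isMDColoring G c)
    (hk : k ≤ (c '' G.edgeSet).ncard)
    (hle : ∀ c, isMDColoring G c → (c '' G.edgeSet).ncard ≤ k) : mdNum G = k := by
  have hbdd : BddAbove {n | ∃ c, isMDColoring G c ∧ (c '' G.edgeSet).ncard = n} :=
    ⟨k, by rintro _ ⟨c, hc, rfl⟩; exact hle c hc⟩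
  refine le_antisymm (csSup_le ⟨_, c, hc, rfl⟩ ?_) (hk.trans (le_csSup hbdd ⟨c, hc, rfl⟩))
  rintro _ ⟨c, hc, rfl⟩
  exact hle c hc

namespace isMDColoring

lemma color_eq_of_triangle (hc : isMDColoring G c) {u v w : V}
    (huv : G.Adj u v) (hvw : G.Adj v w) (huw : G.Adj u w) : c s(u, v) = c s(u, w) := by
  obtain ⟨i, hi⟩ := hc u v huv.ne
  obtain ⟨j, hj⟩ := hc u w huw.ne
  have hi₁ : c s(u, v) = i := by
    simpa using huv.toWalk.exists_mem_edges_of_not_reachable_deleteEdges hi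
  have hi₂ : c s(u, w) = i ∨ c s(v, w) = i := by
    simpa [Sym2.eq_swap, and_or_left, exists_or] using
      (Walk.cons huw hvw.symm.toWalk).exists_mem_edges_of_not_reachable_deleteEdges hi
  have hj₁ : c s(u, w) = j := by
    simpa using huw.toWalk.exists_mem_edges_of_not_reachable_deleteEdges hj
  have hj₂ : c s(u, v) = j ∨ c s(v, w) = j := by
    simpa [and_or_left, exists_or] using
      (Walk.cons huv hvw.toWalk).exists_mem_edges_of_not_reachable_deleteEdges hj
  omega

lemma color_eq_of_isClique (hc : isMDColoring G c) {K : Set V} (hK : G.IsClique K)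
    {a b x y : V} (ha : a ∈ K) (hb : b ∈ K) (hx : x ∈ K) (hy : y ∈ K) (hab : a ≠ b)
    (hxy : x ≠ y) : c s(a, b) = c s(x, y) := by
  have shared : ∀ {u v w}, u ∈ K → v ∈ K → w ∈ K → u ≠ v → u ≠ w →
      c s(u, v) = c s(u, w) := by
    intro u v w hu hv hw huv huw
    by_cases hvw : v = w
    · rw [hvw]
    · exact hc.color_eq_of_triangle (hK hu hv huv) (hK hv hw hvw) (hK hu hw huw)
  by_cases hax : a = x
  · subst hax
    exact shared ha hb hy hab hxy
  calc c s(a, b) = c s(a, x) := shared ha hb hx hab hax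
    _ = c s(x, a) := by rw [Sym2.eq_swap]
    _ = c s(x, y) := shared hx ha hy (Ne.symm hax) hxy

end isMDColoring

section Dense

variable [Fintype V]

namespace SimpleGraph

lemma exists_forall_adj_of_ncard_lt (A : Finset V)
    (h : (Gᶜ.edgeSet \ A.sym2).ncard + #A < Fintype.card V) :
    ∃ z ∉ A, ∀ a ∈ A, G.Adj a z := by
  classical
  by_contra! hA
  choose f hfA hf using hA
  let g : {z // z ∉ A} → ↥(Gᶜ.edgeSet \ A.sym2) := fun z =>
    ⟨s(f z z.2, z), by
      simp only [Set.mem_sdiff, mem_edgeSet, compl_adj, mem_coe, mk_mem_sym2_iff]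
      exact ⟨⟨fun h => z.2 (h ▸ hfA z z.2), hf z z.2⟩, fun h => z.2 h.2⟩⟩
  have hg : Function.Injective g := by
    rintro ⟨z, hz⟩ ⟨z', hz'⟩ h
    simp only [g, Subtype.mk.injEq, Sym2.eq_iff] at h
    rcases h with ⟨-, rfl⟩ | ⟨-, rfl⟩
    · rfl
    · exact absurd (hfA z' hz') hz
  have := Nat.card_le_card_of_injective g hg
  rw [Nat.card_coe_set_eq, Nat.card_eq_fintype_card, Fintype.card_subtype_compl,
    Fintype.card_coe] at this
  omega

lemma ncard_edgeSet_add_ncard_edgeSet_compl (G : SimpleGraph V) :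
    G.edgeSet.ncard + Gᶜ.edgeSet.ncard = (Fintype.card V).choose 2 := by
  classical
  rw [← Set.ncard_union_eq (disjoint_edgeSet.2 disjoint_compl_right), ← edgeSet_sup,
    sup_compl_eq_top, ← coe_edgeFinset, Set.ncard_coe_finset,
    card_edgeFinset_top_eq_card_choose_two]

lemma ncard_edgeSet_compl_add_three_le
    (hE : (Fintype.card V - 1).choose 2 + 2 ≤ G.edgeSet.ncard) :
    Gᶜ.edgeSet.ncard + 3 ≤ Fintype.card V := by
  have htot := ncard_edgeSet_add_ncard_edgeSet_compl G
  rw [Nat.choose_two_eq_pred_choose_two_add_pred] at htot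
  omega

lemma exists_adj_adj_of_ncard_compl (hm : Gᶜ.edgeSet.ncard + 3 ≤ Fintype.card V)
    {u v : V} (huv : u ≠ v) :
    ∃ z, G.Adj u z ∧ G.Adj v z := by
  classical
  have hle : (Gᶜ.edgeSet \ ({u, v} : Finset V).sym2).ncard ≤ Gᶜ.edgeSet.ncard :=
    Set.ncard_le_ncard Set.sdiff_subset
  obtain ⟨z, -, hz⟩ := exists_forall_adj_of_ncard_lt (G := G) {u, v}
    (by rw [card_pair huv]; omega)
  exact ⟨z, hz u (by simp), hz v (by simp)⟩

lemma exists_adj_adj_adj_of_ncard_compl (hm : Gᶜ.edgeSet.ncard + 3 ≤ Fintype.card V)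
    {u v w : V} (hvw : v ≠ w) (hadj : ¬ G.Adj v w) :
    ∃ z, G.Adj u z ∧ G.Adj v z ∧ G.Adj w z := by
  classical
  have hvw' : s(v, w) ∈ Gᶜ.edgeSet := by simpa using ⟨hvw, hadj⟩
  have hle : (Gᶜ.edgeSet \ ({u, v, w} : Finset V).sym2).ncard < Gᶜ.edgeSet.ncard :=
    Set.ncard_lt_ncard (Set.sdiff_ssubset_left_iff.2 ⟨s(v, w), hvw', by simp⟩)
  obtain ⟨z, -, hz⟩ := exists_forall_adj_of_ncard_lt (G := G) {u, v, w}
    (by have := card_le_three (a := u) (b := v) (c := w); omega)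
  exact ⟨z, hz u (by simp), hz v (by simp), hz w (by simp)⟩

end SimpleGraph

namespace isMDColoring

lemma color_eq_of_adj_of_adj (hc : isMDColoring G c)
    (hm : Gᶜ.edgeSet.ncard + 3 ≤ Fintype.card V) {u v w : V}
    (huv : G.Adj u v) (huw : G.Adj u w) : c s(u, v) = c s(u, w) := by
  by_cases hvw : v = w
  · rw [hvw]
  by_cases hadj : G.Adj v w
  · exact hc.color_eq_of_triangle huv hadj huw
  obtain ⟨z, huz, hvz, hwz⟩ := exists_adj_adj_adj_of_ncard_compl hm (u := u) hvw hadj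
  exact (hc.color_eq_of_triangle huv hvz huz).trans (hc.color_eq_of_triangle huz hwz.symm huw)

lemma color_eq_of_mem_edgeSet (hc : isMDColoring G c)
    (hm : Gᶜ.edgeSet.ncard + 3 ≤ Fintype.card V) {e f : Sym2 V}
    (he : e ∈ G.edgeSet) (hf : f ∈ G.edgeSet) : c e = c f := by
  induction e with | h a b => ?_
  induction f with | h x y => ?_
  by_cases hax : a = x
  · subst hax
    exact hc.color_eq_of_adj_of_adj hm he hf
  obtain ⟨z, haz, hxz⟩ := exists_adj_adj_of_ncard_compl hm hax
  calc c s(a, b) = c s(a, z) := hc.color_eq_of_adj_of_adj hm he haz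
    _ = c s(z, a) := by rw [Sym2.eq_swap]
    _ = c s(z, x) := hc.color_eq_of_adj_of_adj hm haz.symm hxz.symm
    _ = c s(x, z) := by rw [Sym2.eq_swap]
    _ = c s(x, y) := hc.color_eq_of_adj_of_adj hm hxz hf

end isMDColoring

lemma mdNum_eq_one_of_ncard_compl (hm : Gᶜ.edgeSet.ncard + 3 ≤ Fintype.card V) :
    mdNum G = 1 := by
  obtain ⟨u, v, huv⟩ := Fintype.exists_pair_of_one_lt_card (by omega : 1 < Fintype.card V)
  obtain ⟨z, huz, -⟩ := exists_adj_adj_of_ncard_compl hm huv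
  have he : s(u, z) ∈ G.edgeSet := huz
  refine mdNum_eq_of_le (fun _ => 0) (fun u v huv => ⟨0, ?_⟩) ?_ fun c hc => ?_
  · simp [huv]
  · rw [Set.Nonempty.image_const ⟨_, he⟩, Set.ncard_singleton]
  · calc (c '' G.edgeSet).ncard ≤ ({c s(u, z)} : Set ℕ).ncard := by
          refine Set.ncard_le_ncard ?_ (Set.toFinite _)
          rintro _ ⟨e, he', rfl⟩
          exact hc.color_eq_of_mem_edgeSet hm he' he
      _ = 1 := Set.ncard_singleton _

end Dense

def pendantGraph (p q : V) : SimpleGraph V :=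
  (⊤ : SimpleGraph V).deleteIncidenceSet p ⊔ edge p q

section pendantGraph

variable {p q : V}

lemma pendantGraph_adj_of_ne {a b : V} (hab : a ≠ b) (ha : a ≠ p) (hb : b ≠ p) :
    (pendantGraph p q).Adj a b :=
  Or.inl (deleteIncidenceSet_adj.2 ⟨hab, ha, hb⟩)

lemma pendantGraph_adj_pendant (hpq : p ≠ q) : (pendantGraph p q).Adj p q :=
  Or.inr ((edge_adj p q p q).2 ⟨Or.inl ⟨rfl, rfl⟩, hpq⟩)

lemma isClique_pendantGraph : (pendantGraph p q).IsClique {p}ᶜ :=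
  fun _ ha _ hb hab => pendantGraph_adj_of_ne hab ha hb

lemma ne_of_pendantGraph_adj {a b : V} (h : (pendantGraph p q).Adj a b)
    (hpend : s(a, b) ≠ s(p, q)) : a ≠ p ∧ b ≠ p := by
  rcases h with h | h
  · exact (deleteIncidenceSet_adj.1 h).2
  · simp [edge_adj] at h
    aesop

lemma pendantGraph_connected (hpq : p ≠ q) : (pendantGraph p q).Connected := by
  refine (connected_iff_exists_forall_reachable _).2 ⟨q, fun x => ?_⟩
  by_cases hxq : x = q
  · rw [hxq]
  by_cases hxp : x = p
  · exact hxp ▸ (pendantGraph_adj_pendant hpq).symm.reachable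
  · exact (pendantGraph_adj_of_ne (Ne.symm hxq) hpq.symm hxp).reachable

lemma ncard_edgeSet_pendantGraph [Fintype V] (hpq : p ≠ q) :
    (pendantGraph p q).edgeSet.ncard = (Fintype.card V - 1).choose 2 + 1 := by
  classical
  have hnadj : ¬ ((⊤ : SimpleGraph V).deleteIncidenceSet p).Adj p q := by
    simp [deleteIncidenceSet_adj]
  have h := card_edgeFinset_sup_edge _ hnadj hpq
  rw [card_edgeFinset_deleteIncidenceSet, card_edgeFinset_top_eq_card_choose_two,
    complete_graph_degree, Nat.choose_two_eq_pred_choose_two_add_pred, Nat.add_sub_cancel] at h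
  rw [← h, ← coe_edgeFinset, Set.ncard_coe_finset, pendantGraph]
  convert rfl

lemma isMDColoring_pendantGraph :
    isMDColoring (pendantGraph p q) (({s(p, q)} : Set (Sym2 V)).indicator 1) := by
  set c := ({s(p, q)} : Set (Sym2 V)).indicator (1 : Sym2 V → ℕ)
  have hp : ∀ a b, ((pendantGraph p q).deleteEdges {e | c e = 1}).Adj a b →
      a ∈ ({p} : Set V) → b ∈ ({p} : Set V) := by
    intro a b hab ha
    rw [deleteEdges_adj] at hab
    refine absurd ha (ne_of_pendantGraph_adj hab.1 fun h => hab.2 ?_).1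
    simp [c, h]
  intro u v huv
  by_cases hu : u = p
  · exact ⟨1, not_reachable_of_forall_adj_mem hp hu (hu ▸ huv.symm)⟩
  by_cases hv : v = p
  · exact ⟨1, fun h => not_reachable_of_forall_adj_mem hp hv (hv ▸ huv) h.symm⟩
  -- deleting colour `0` leaves only the pendant edge, so `S` is closed under adjacency
  refine ⟨0, not_reachable_of_forall_adj_mem (S := {x | x = u ∨ s(u, x) = s(p, q)}) ?_
    (Or.inl rfl) ?_⟩
  · intro a b hab ha
    rw [deleteEdges_adj] at hab
    have hpend : s(a, b) = s(p, q) := by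
      by_contra h
      simp [c, h] at hab
    rcases ha with rfl | ha
    · exact Or.inr hpend
    · exact Or.inl (Sym2.congr_left.1 (Sym2.eq_swap.trans (hpend.trans ha.symm)))
  · rintro (h | h)
    · exact huv h.symm
    · have hp : p ∈ s(u, v) := h ▸ Sym2.mem_mk_left p q
      rcases Sym2.mem_iff.1 hp with h | h
      exacts [hu h.symm, hv h.symm]

lemma mdNum_pendantGraph [Fintype V] {r : V} (hpq : p ≠ q) (hpr : p ≠ r) (hqr : q ≠ r) :
    mdNum (pendantGraph p q) = 2 := by
  have hqr' : s(q, r) ≠ s(p, q) := fun h => hpr (Sym2.congr_left.1 (Sym2.eq_swap.trans h)).symm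
  refine mdNum_eq_of_le _ isMDColoring_pendantGraph ?_ fun c hc => ?_
  · calc 2 = ({0, 1} : Set ℕ).ncard := (Set.ncard_pair zero_ne_one).symm
      _ ≤ _ := by
        refine Set.ncard_le_ncard ?_ ((Set.toFinite _).image _)
        rintro _ (rfl | rfl)
        · exact ⟨s(q, r), pendantGraph_adj_of_ne hqr hpq.symm hpr.symm, by simp [hqr']⟩
        · exact ⟨s(p, q), pendantGraph_adj_pendant hpq, by simp⟩
  · calc (c '' (pendantGraph p q).edgeSet).ncard
        ≤ ({c s(q, r), c s(p, q)} : Set ℕ).ncard := by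
          refine Set.ncard_le_ncard ?_ (Set.toFinite _)
          rintro _ ⟨e, he, rfl⟩
          induction e with | h a b => ?_
          rw [mem_edgeSet] at he
          by_cases hpend : s(a, b) = s(p, q)
          · exact Or.inr (congrArg c hpend)
          obtain ⟨ha, hb⟩ := ne_of_pendantGraph_adj he hpend
          exact Or.inl (hc.color_eq_of_isClique isClique_pendantGraph ha hb hpq.symm hpr.symm
            he.ne hqr)
      _ ≤ 2 := (Set.ncard_insert_le _ _).trans (by rw [Set.ncard_singleton])

end pendantGraph

theorem dense_md (n : ℕ) (hn : 4 ≤ n) :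
    (∀ (V : Type) [Fintype V], ∀ G : SimpleGraph V, Fintype.card V = n →
      (n - 1).choose 2 + 2 ≤ G.edgeSet.ncard → mdNum G = 1) ∧
    ∃ H : SimpleGraph (Fin n), H.Connected ∧
      H.edgeSet.ncard = (n - 1).choose 2 + 1 ∧ mdNum H = 2 := by
  refine ⟨fun V _ G hV hE => mdNum_eq_one_of_ncard_compl ?_, ?_⟩
  · exact ncard_edgeSet_compl_add_three_le (hV ▸ hE)
  let p : Fin n := ⟨0, by omega⟩
  let q : Fin n := ⟨1, by omega⟩
  let r : Fin n := ⟨2, by omega⟩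
  have hpq : p ≠ q := by simp [p, q]
  refine ⟨pendantGraph p q, pendantGraph_connected hpq, ?_,
    mdNum_pendantGraph (r := r) hpq (by simp [p, r]) (by simp [q, r])⟩
  rw [ncard_edgeSet_pendantGraph hpq, Fintype.card_fin]
end

section
/- For any two connected graphs G and H each with at least 2 vertices, the strong product satisfies md(G ⊠ H) = 1. -/
/-- The strong product of two simple graphs. -/
def strongProd {V W : Type*} (G : SimpleGraph V) (H : SimpleGraph W) :
    SimpleGraph (V × W) where
  Adj x y := (G.Adj x.1 y.1 ∧ x.2 = y.2) ∨ (x.1 = y.1 ∧ H.Adj x.2 y.2) ∨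
    (G.Adj x.1 y.1 ∧ H.Adj x.2 y.2)
  symm := by
    constructor
    rintro x y (⟨h1, h2⟩ | ⟨h1, h2⟩ | ⟨h1, h2⟩)
    · exact Or.inl ⟨h1.symm, h2.symm⟩
    · exact Or.inr (Or.inl ⟨h1.symm, h2.symm⟩)
    · exact Or.inr (Or.inr ⟨h1.symm, h2.symm⟩)
  loopless := by
    constructor
    rintro x (⟨h1, _⟩ | ⟨_, h2⟩ | ⟨h1, _⟩)
    · exact G.irrefl h1
    · exact H.irrefl h2
    · exact G.irrefl h1

/-!
In an MD-colouring the ends of an edge can only be separated by the colour of that edge, so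
every triangle is monochromatic. In `G ⊠ H` each edge lies in a triangle with a `G`-edge
`(u, a) (v, a)` and an `H`-edge `(u, a) (u, b)`, and the connectivity of `G` and `H` spreads the
colour of one such triangle over all edges. So every MD-colouring uses exactly one colour, and the
constant colouring is one.
-/

namespace isMDColoring

variable {X : Type*} {Γ : SimpleGraph X} {c : Sym2 X → ℕ}

lemma not_reachable_deleteEdges_color (hc : isMDColoring Γ c) {x y : X} (h : Γ.Adj x y) :
    ¬ (Γ.deleteEdges {e | c e = c s(x, y)}).Reachable x y := by
  obtain ⟨i, hi⟩ := hc x y h.ne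
  obtain rfl : c s(x, y) = i := by
    by_contra hne
    exact hi (SimpleGraph.Adj.reachable (SimpleGraph.deleteEdges_adj.mpr ⟨h, hne⟩))
  exact hi

lemma color_eq_or_color_eq_of_triangle (hc : isMDColoring Γ c) {x y z : X} (hxy : Γ.Adj x y)
    (hxz : Γ.Adj x z) (hzy : Γ.Adj z y) :
    c s(x, z) = c s(x, y) ∨ c s(z, y) = c s(x, y) := by
  by_contra! hne
  refine hc.not_reachable_deleteEdges_color hxy ?_
  exact (SimpleGraph.deleteEdges_adj.mpr ⟨hxz, hne.1⟩).reachable.trans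
    (SimpleGraph.deleteEdges_adj.mpr ⟨hzy, hne.2⟩).reachable

lemma color_eq_of_triangle_s18 (hc : isMDColoring Γ c) {x y z : X} (hxy : Γ.Adj x y)
    (hxz : Γ.Adj x z) (hyz : Γ.Adj y z) : c s(x, y) = c s(x, z) ∧ c s(x, y) = c s(y, z) := by
  -- each edge shares its colour with another edge of the triangle, which forces all three to agree
  have h₁ := hc.color_eq_or_color_eq_of_triangle hxy hxz hyz.symm
  have h₂ := hc.color_eq_or_color_eq_of_triangle hxz hxy hyz
  have h₃ := hc.color_eq_or_color_eq_of_triangle hyz hxy.symm hxz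
  simp only [Sym2.eq_swap (a := z) (b := y), Sym2.eq_swap (a := y) (b := x)] at h₁ h₃
  omega

end isMDColoring

lemma isMDColoring_const_s18 {X : Type*} (Γ : SimpleGraph X) (i : ℕ) :
    isMDColoring Γ (fun _ ↦ i) := by
  intro x y hxy
  refine ⟨i, ?_⟩
  simpa [SimpleGraph.deleteEdges_univ, SimpleGraph.reachable_bot] using hxy

lemma mdNum_eq_one {X : Type*} {Γ : SimpleGraph X} (hΓ : Γ.edgeSet.Nonempty)
    (h : ∀ c, isMDColoring Γ c → (c '' Γ.edgeSet).Subsingleton) : mdNum Γ = 1 := by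
  have hcard : ∀ c, isMDColoring Γ c → (c '' Γ.edgeSet).ncard = 1 := fun c hc ↦
    Set.ncard_eq_one.mpr ⟨_, (h c hc).eq_singleton_of_mem (Set.mem_image_of_mem c hΓ.some_mem)⟩
  have hset : {n | ∃ c, isMDColoring Γ c ∧ (c '' Γ.edgeSet).ncard = n} = {1} := by
    ext n
    constructor
    · rintro ⟨c, hc, rfl⟩
      exact hcard c hc
    · rintro rfl
      exact ⟨_, isMDColoring_const_s18 Γ 0, hcard _ (isMDColoring_const_s18 Γ 0)⟩
  rw [mdNum, hset, csSup_singleton]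

lemma SimpleGraph.Reachable.apply_eq_of_forall_adj {X α : Type*} {Γ : SimpleGraph X} (f : X → α)
    (h : ∀ x y, Γ.Adj x y → f x = f y) {x y : X} (hxy : Γ.Reachable x y) : f x = f y := by
  obtain ⟨w⟩ := hxy
  induction w with
  | nil => rfl
  | cons hadj _ ih => exact (h _ _ hadj).trans ih

section strongProd

variable {V W : Type*} {G : SimpleGraph V} {H : SimpleGraph W}

lemma strongProd_adj_of_left {u v : V} (huv : G.Adj u v) (a : W) :
    (strongProd G H).Adj (u, a) (v, a) :=
  Or.inl ⟨huv, rfl⟩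

lemma strongProd_adj_of_right (u : V) {a b : W} (hab : H.Adj a b) :
    (strongProd G H).Adj (u, a) (u, b) :=
  Or.inr (Or.inl ⟨rfl, hab⟩)

lemma strongProd_adj_of_left_of_right {u v : V} {a b : W} (huv : G.Adj u v) (hab : H.Adj a b) :
    (strongProd G H).Adj (u, a) (v, b) :=
  Or.inr (Or.inr ⟨huv, hab⟩)

namespace isMDColoring

variable {c : Sym2 (V × W) → ℕ} (hc : isMDColoring (strongProd G H) c)
include hc

lemma strongProd_color_left_eq_right {u v : V} {a b : W} (huv : G.Adj u v) (hab : H.Adj a b) :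
    c s((u, a), (v, a)) = c s((u, a), (u, b)) :=
  (hc.color_eq_of_triangle_s18 (strongProd_adj_of_left huv a) (strongProd_adj_of_right u hab)
    (strongProd_adj_of_left_of_right huv.symm hab)).1

lemma strongProd_color_diag_eq_left {u v : V} {a b : W} (huv : G.Adj u v) (hab : H.Adj a b) :
    c s((u, a), (v, b)) = c s((u, a), (v, a)) :=
  (hc.color_eq_of_triangle_s18 (strongProd_adj_of_left_of_right huv hab)
    (strongProd_adj_of_left huv a) (strongProd_adj_of_right v hab.symm)).1

lemma strongProd_color_left_eq_of_reachable {u v : V} (huv : G.Adj u v) {a b : W}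
    (hab : H.Reachable a b) : c s((u, a), (v, a)) = c s((u, b), (v, b)) := by
  refine hab.apply_eq_of_forall_adj (fun a ↦ c s((u, a), (v, a))) fun a b hab ↦ ?_
  rw [hc.strongProd_color_left_eq_right huv hab, Sym2.eq_swap,
    hc.strongProd_color_left_eq_right huv hab.symm]

lemma strongProd_color_right_eq_of_reachable {u v : V} (huv : G.Reachable u v) {a b : W}
    (hab : H.Adj a b) : c s((u, a), (u, b)) = c s((v, a), (v, b)) := by
  refine huv.apply_eq_of_forall_adj (fun u ↦ c s((u, a), (u, b))) fun u v huv ↦ ?_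
  rw [← hc.strongProd_color_left_eq_right huv hab, Sym2.eq_swap,
    hc.strongProd_color_left_eq_right huv.symm hab]

lemma strongProd_color_left_eq_color_right (hG : G.Preconnected) (hH : H.Preconnected)
    {u v : V} (huv : G.Adj u v) (a : W) (u' : V) {a' b' : W} (hab' : H.Adj a' b') :
    c s((u, a), (v, a)) = c s((u', a'), (u', b')) := by
  rw [hc.strongProd_color_left_eq_of_reachable huv (hH a a'),
    hc.strongProd_color_left_eq_right huv hab',
    hc.strongProd_color_right_eq_of_reachable (hG u u') hab']

lemma strongProd_image_edgeSet_subsingleton [Nontrivial V] [Nontrivial W] (hG : G.Connected)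
    (hH : H.Connected) : (c '' (strongProd G H).edgeSet).Subsingleton := by
  obtain ⟨u₀⟩ := hG.nonempty
  obtain ⟨a₀⟩ := hH.nonempty
  obtain ⟨v₀, huv₀⟩ := hG.preconnected.exists_adj_of_nontrivial u₀
  obtain ⟨b₀, hab₀⟩ := hH.preconnected.exists_adj_of_nontrivial a₀
  have hbase {u v : V} (huv : G.Adj u v) :=
    hc.strongProd_color_left_eq_color_right hG.preconnected hH.preconnected huv
  suffices ∀ e ∈ (strongProd G H).edgeSet, c e = c s((u₀, a₀), (u₀, b₀)) by
    rintro _ ⟨e, he, rfl⟩ _ ⟨e', he', rfl⟩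
    rw [this e he, this e' he']
  intro e he
  induction e using Sym2.ind with
  | _ x y =>
    obtain ⟨u, a⟩ := x
    obtain ⟨v, b⟩ := y
    rcases he with ⟨huv, rfl : a = b⟩ | ⟨rfl : u = v, hab⟩ | ⟨huv, hab⟩
    · exact hbase huv a u₀ hab₀
    · exact (hbase huv₀ a u hab).symm.trans (hbase huv₀ a u₀ hab₀)
    · exact (hc.strongProd_color_diag_eq_left huv hab).trans (hbase huv a u₀ hab₀)

end isMDColoring

end strongProd

theorem strongProd_md_general {V W : Type*}
    (G : SimpleGraph V) (H : SimpleGraph W) (hG : G.Connected) (hH : H.Connected)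
    [Nontrivial V] [Nontrivial W] :
    mdNum (strongProd G H) = 1 := by
  obtain ⟨u⟩ := hG.nonempty
  obtain ⟨v, huv⟩ := hG.preconnected.exists_adj_of_nontrivial u
  obtain ⟨a⟩ := hH.nonempty
  exact mdNum_eq_one ⟨s((u, a), (v, a)), strongProd_adj_of_left huv a⟩
    fun c hc ↦ hc.strongProd_image_edgeSet_subsingleton hG hH

theorem strongProd_md {V W : Type*} [Fintype V] [Fintype W]
    (G : SimpleGraph V) (H : SimpleGraph W) (hG : G.Connected) (hH : H.Connected)
    [Nontrivial V] [Nontrivial W] :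
    mdNum (strongProd G H) = 1 :=
  strongProd_md_general G H hG hH
end
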